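/- Let u : [t₀, T] → ℝ^d be differentiable and satisfy u̇(t) = B(t) + C(t) u(t) with u(t₀) = 0, where ‖B(t)‖ ≤ A_θ and ‖C(t)‖ (operator norm) ≤ A_x for all t ∈ [t₀, T], with A_θ, A_x > 0. Then for every t ∈ [t₀, T], ‖u(t)‖ ≤ sqrt( (A_θ/(A_θ + 2A_x)) (e^{(A_θ + 2A_x)(T − t₀)} − 1) ). -/

import Mathlib

open Set

/-!
Writing `v = ‖u‖²`, one has `v' = 2⟪u, B + C u⟫ ≤ 2 Aθ ‖u‖ + 2 Ax ‖u‖² ≤ (Aθ + 2 Ax) v + Aθ`,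
using `2‖u‖ ≤ 1 + ‖u‖²`. Grönwall's inequality with `v(t₀) = 0` then gives
`v(t) ≤ Aθ / (Aθ + 2 Ax) · (exp((Aθ + 2 Ax)(t - t₀)) - 1)`, which increases with `t`.
-/

section InnerProductSpace

variable {E : Type*} [NormedAddCommGroup E] [InnerProductSpace ℝ E]

theorem two_mul_inner_add_apply_le {x b : E} {C : E →L[ℝ] E} {a c : ℝ}
    (hb : ‖b‖ ≤ a) (hC : ‖C‖ ≤ c) :
    2 * inner ℝ x (b + C x) ≤ (a + 2 * c) * ‖x‖ ^ 2 + a := by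
  have hb' : inner ℝ x b ≤ ‖x‖ * a :=
    (real_inner_le_norm x b).trans (mul_le_mul_of_nonneg_left hb (norm_nonneg x))
  have hC' : inner ℝ x (C x) ≤ c * ‖x‖ ^ 2 :=
    calc inner ℝ x (C x) ≤ ‖x‖ * ‖C x‖ := real_inner_le_norm _ _
      _ ≤ ‖x‖ * (c * ‖x‖) := by gcongr; exact C.le_of_opNorm_le hC x
      _ = c * ‖x‖ ^ 2 := by ring
  have ha : 0 ≤ a := (norm_nonneg b).trans hb
  rw [inner_add_right]
  nlinarith [sq_nonneg (‖x‖ - 1)]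

theorem norm_sq_le_gronwallBound_of_inner_deriv_right_le {f f' : ℝ → E} {δ K ε a b : ℝ}
    (hf : ContinuousOn f (Icc a b))
    (hf' : ∀ x ∈ Ico a b, HasDerivWithinAt f (f' x) (Ici x) x)
    (ha : ‖f a‖ ^ 2 ≤ δ) (bound : ∀ x ∈ Ico a b, 2 * inner ℝ (f x) (f' x) ≤ K * ‖f x‖ ^ 2 + ε) :
    ∀ x ∈ Icc a b, ‖f x‖ ^ 2 ≤ gronwallBound δ K ε (x - a) :=
  le_gronwallBound_of_liminf_deriv_right_le (hf.norm.pow 2)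
    (fun x hx _ hr => (hf' x hx).norm_sq.liminf_right_slope_le hr) ha bound

end InnerProductSpace

theorem sensitivity_norm_bound_general
    {d : ℕ}
    (u : ℝ → EuclideanSpace ℝ (Fin d))
    (B : ℝ → EuclideanSpace ℝ (Fin d))
    (Cm : ℝ → EuclideanSpace ℝ (Fin d) →L[ℝ] EuclideanSpace ℝ (Fin d))
    (t₀ T Aθ Ax : ℝ) (hAθ : 0 < Aθ) (hAx : 0 < Ax)
    (hode : ∀ t ∈ Set.Icc t₀ T, HasDerivAt u (B t + Cm t (u t)) t)
    (hinit : u t₀ = 0)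
    (hB : ∀ t ∈ Set.Icc t₀ T, ‖B t‖ ≤ Aθ)
    (hC : ∀ t ∈ Set.Icc t₀ T, ‖Cm t‖ ≤ Ax) :
    ∀ t ∈ Set.Icc t₀ T,
      ‖u t‖ ≤ Real.sqrt (Aθ / (Aθ + 2 * Ax) * (Real.exp ((Aθ + 2 * Ax) * (T - t₀)) - 1)) := by
  intro t ht
  have hK : 0 < Aθ + 2 * Ax := by positivity
  have hsq : ‖u t‖ ^ 2 ≤ gronwallBound 0 (Aθ + 2 * Ax) Aθ (t - t₀) :=
    norm_sq_le_gronwallBound_of_inner_deriv_right_le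
      (fun s hs => (hode s hs).continuousAt.continuousWithinAt)
      (fun s hs => (hode s (Ico_subset_Icc_self hs)).hasDerivWithinAt)
      (by simp [hinit])
      (fun s hs => two_mul_inner_add_apply_le (hB s (Ico_subset_Icc_self hs))
        (hC s (Ico_subset_Icc_self hs)))
      t ht
  have hmono : gronwallBound 0 (Aθ + 2 * Ax) Aθ (t - t₀) ≤
      gronwallBound 0 (Aθ + 2 * Ax) Aθ (T - t₀) :=
    gronwallBound_mono le_rfl hAθ.le hK.le (sub_le_sub_right ht.2 t₀)
  refine Real.le_sqrt_of_sq_le (hsq.trans (hmono.trans_eq ?_))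
  rw [gronwallBound_of_K_ne_0 hK.ne']
  ring

/-- Grönwall-type bound for a linear inhomogeneous ODE `u̇ = B(t) + C(t) u(t)`, `u(t₀) = 0`,
with `‖B(t)‖ ≤ Aθ` and `‖C(t)‖ ≤ Ax`:
`‖u(t)‖ ≤ sqrt((Aθ/(Aθ + 2Ax))(exp((Aθ + 2Ax)(T - t₀)) - 1))` on `[t₀, T]`. -/
theorem sensitivity_norm_bound
    {d : ℕ}
    (u : ℝ → EuclideanSpace ℝ (Fin d))
    (B : ℝ → EuclideanSpace ℝ (Fin d))
    (Cm : ℝ → EuclideanSpace ℝ (Fin d) →L[ℝ] EuclideanSpace ℝ (Fin d))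
    (t₀ T Aθ Ax : ℝ) (htT : t₀ ≤ T) (hAθ : 0 < Aθ) (hAx : 0 < Ax)
    (hode : ∀ t ∈ Set.Icc t₀ T, HasDerivAt u (B t + Cm t (u t)) t)
    (hinit : u t₀ = 0)
    (hB : ∀ t ∈ Set.Icc t₀ T, ‖B t‖ ≤ Aθ)
    (hC : ∀ t ∈ Set.Icc t₀ T, ‖Cm t‖ ≤ Ax) :
    ∀ t ∈ Set.Icc t₀ T,
      ‖u t‖ ≤ Real.sqrt (Aθ / (Aθ + 2 * Ax) * (Real.exp ((Aθ + 2 * Ax) * (T - t₀)) - 1)) :=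
  sensitivity_norm_bound_general u B Cm t₀ T Aθ Ax hAθ hAx hode hinit hB hC
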